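/- Let H be a Hopf G-coalgebra. Then for all g, h ∈ G, the antipode satisfies Δ_{h^{-1},g^{-1}} ∘ S_{gh} = (S_h ⊗ S_g) ∘ τ ∘ Δ_{g,h}, where τ is the flip of tensor factors. That is, the antipode is an anti-coalgebra morphism. -/

import Mathlib

open TensorProduct

/-- Cast along an equality of indices, as a linear map. -/
def castLM (k : Type*) [Field k] {G : Type*} (H : G → Type*)
    [∀ g, AddCommGroup (H g)] [∀ g, Module k (H g)] {a b : G} (hab : a = b) :
    H a →ₗ[k] H b where
  toFun x := hab ▸ x
  map_add' x y := by subst hab; rfl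
  map_smul' c x := by subst hab; rfl

/-- A Hopf `G`-coalgebra over a field `k`: a family of `k`-algebras `(H g, mul g, one g)`
together with comultiplication algebra morphisms `Δ g h : H (g*h) → H g ⊗ H h`,
a counit `ε : H 1 → k` and an antipode `S g : H g → H g⁻¹`. -/
structure HopfGCoalgebra (k : Type*) [Field k] (G : Type*) [Group G]
    (H : G → Type*) [∀ g, AddCommGroup (H g)] [∀ g, Module k (H g)] where
  mul : ∀ g : G, H g ⊗[k] H g →ₗ[k] H g
  one : ∀ g : G, H g
  comul : ∀ g h : G, H (g * h) →ₗ[k] H g ⊗[k] H h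
  counit : H (1 : G) →ₗ[k] k
  S : ∀ g : G, H g →ₗ[k] H g⁻¹
  mul_assoc' : ∀ (g : G) (x y z : H g),
    mul g (mul g (x ⊗ₜ[k] y) ⊗ₜ[k] z) = mul g (x ⊗ₜ[k] mul g (y ⊗ₜ[k] z))
  one_mul' : ∀ (g : G) (x : H g), mul g (one g ⊗ₜ[k] x) = x
  mul_one' : ∀ (g : G) (x : H g), mul g (x ⊗ₜ[k] one g) = x
  coassoc : ∀ (g h l : G) (x : H (g * h * l)),
    (TensorProduct.assoc k (H g) (H h) (H l))
      (TensorProduct.map (comul g h) LinearMap.id (comul (g * h) l x))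
    = TensorProduct.map LinearMap.id (comul h l)
        (comul g (h * l) (castLM k H (mul_assoc g h l) x))
  counit_left : ∀ (g : G) (x : H ((1 : G) * g)),
    (TensorProduct.lid k (H g)) (TensorProduct.map counit LinearMap.id (comul 1 g x))
      = castLM k H (one_mul g) x
  counit_right : ∀ (g : G) (x : H (g * (1 : G))),
    (TensorProduct.rid k (H g)) (TensorProduct.map LinearMap.id counit (comul g 1 x))
      = castLM k H (mul_one g) x
  comul_mul : ∀ (g h : G) (x y : H (g * h)),
    comul g h (mul (g * h) (x ⊗ₜ[k] y))
      = TensorProduct.map (mul g) (mul h)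
          ((TensorProduct.tensorTensorTensorComm k (H g) (H h) (H g) (H h))
            (comul g h x ⊗ₜ[k] comul g h y))
  comul_one : ∀ g h : G, comul g h (one (g * h)) = one g ⊗ₜ[k] one h
  counit_mul : ∀ x y : H (1 : G), counit (mul 1 (x ⊗ₜ[k] y)) = counit x * counit y
  counit_one : counit (one 1) = 1
  antipode_left : ∀ (g : G) (x : H (g⁻¹ * g)),
    mul g (TensorProduct.map (castLM k H (inv_inv g) ∘ₗ S g⁻¹) LinearMap.id (comul g⁻¹ g x))
      = counit (castLM k H (inv_mul_cancel g) x) • one g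
  antipode_right : ∀ (g : G) (x : H (g * g⁻¹)),
    mul g (TensorProduct.map LinearMap.id (castLM k H (inv_inv g) ∘ₗ S g⁻¹) (comul g g⁻¹ x))
      = counit (castLM k H (mul_inv_cancel g) x) • one g

/-- A Hopf `G`-coalgebra is involutory if `S g⁻¹ ∘ S g = id`. -/
def HopfGCoalgebra.Involutory {k : Type*} [Field k] {G : Type*} [Group G]
    {H : G → Type*} [∀ g, AddCommGroup (H g)] [∀ g, Module k (H g)]
    (A : HopfGCoalgebra k G H) : Prop :=
  ∀ (g : G) (x : H g), castLM k H (inv_inv g) (A.S g⁻¹ (A.S g x)) = x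

/-!
Work in the `G`-graded convolution algebra of linear maps `H a → H h⁻¹ ⊗ H g⁻¹`:
`f * f' = m ∘ (f ⊗ f') ∘ Δ_{a,b}` on `H (a * b)`, with unit `ε(·) (1 ⊗ 1)` on `H 1`; indices agree
only up to propositional equality, so every identity in it carries a `castLM`.
Since `μ = Δ_{h⁻¹,g⁻¹}` is multiplicative, `(μ ∘ S_{gh}) * μ = ε`. With `ι u = u ⊗ 1` and
`j v = 1 ⊗ v` one has `μ = ι * j` and `(S_h ⊗ S_g) ∘ τ ∘ Δ_{g,h} = (j ∘ S_g) * (ι ∘ S_h)`, so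
`μ * ((S_h ⊗ S_g) ∘ τ ∘ Δ_{g,h}) = ι * (j * (j ∘ S_g)) * (ι ∘ S_h) = ι * (ι ∘ S_h) = ε`.
A left and a right inverse of `μ` coincide.
-/

section castLM

variable {k : Type*} [Field k] {G : Type*} {H : G → Type*}
  [∀ g, AddCommGroup (H g)] [∀ g, Module k (H g)]

theorem castLM_comp_castLM {a b c : G} (p : a = b) (q : b = c) :
    castLM k H q ∘ₗ castLM k H p = castLM k H (p.trans q) := by
  subst p q; rfl

theorem comp_castLM_injective {M : Type*} [AddCommMonoid M] [Module k M] {a b : G}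
    (p : a = b) :
    Function.Injective fun f : H b →ₗ[k] M => f ∘ₗ castLM k H p := by
  subst p; exact fun _ _ h => h

end castLM

namespace HopfGCoalgebra

variable {k : Type*} [Field k] {G : Type*} [Group G] {H : G → Type*}
  [∀ g, AddCommGroup (H g)] [∀ g, Module k (H g)] (A : HopfGCoalgebra k G H)

-- `antipode_left` at `d⁻¹` involves `S d⁻¹⁻¹`, and `d⁻¹⁻¹` is only propositionally `d`.
theorem mul_rTensor_S_comul (d : G) (x : H (d * d⁻¹)) :
    A.mul d⁻¹ ((A.S d).rTensor (H d⁻¹) (A.comul d d⁻¹ x))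
      = A.counit (castLM k H (mul_inv_cancel d) x) • A.one d⁻¹ := by
  have key : ∀ (c : G) (hc : d⁻¹⁻¹ = c) (x : H (c * d⁻¹)),
      A.mul d⁻¹ ((castLM k H (hc ▸ inv_inv d⁻¹) ∘ₗ A.S c).rTensor (H d⁻¹) (A.comul c d⁻¹ x))
        = A.counit (castLM k H (hc ▸ inv_mul_cancel d⁻¹) x) • A.one d⁻¹ := by
    rintro c rfl x
    exact A.antipode_left d⁻¹ x
  exact key d (inv_inv d) x

theorem mul_lTensor_S_comul (d : G) (x : H (d⁻¹ * d)) :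
    A.mul d⁻¹ ((A.S d).lTensor (H d⁻¹) (A.comul d⁻¹ d x))
      = A.counit (castLM k H (inv_mul_cancel d) x) • A.one d⁻¹ := by
  have key : ∀ (c : G) (hc : d⁻¹⁻¹ = c) (x : H (d⁻¹ * c)),
      A.mul d⁻¹ ((castLM k H (hc ▸ inv_inv d⁻¹) ∘ₗ A.S c).lTensor (H d⁻¹) (A.comul d⁻¹ c x))
        = A.counit (castLM k H (hc ▸ mul_inv_cancel d⁻¹) x) • A.one d⁻¹ := by
    rintro c rfl x
    exact A.antipode_right d⁻¹ x
  exact key d (inv_inv d) x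

section Convolution

variable {B : Type*} [AddCommMonoid B] [Module k B] (m : B ⊗[k] B →ₗ[k] B)

noncomputable def conv {a b : G} (f : H a →ₗ[k] B) (f' : H b →ₗ[k] B) : H (a * b) →ₗ[k] B :=
  m ∘ₗ map f f' ∘ₗ A.comul a b

theorem conv_comp_castLM_left {a a' b : G} (p : a = a') (f : H a' →ₗ[k] B) (f' : H b →ₗ[k] B) :
    A.conv m (f ∘ₗ castLM k H p) f' = A.conv m f f' ∘ₗ castLM k H (congrArg (· * b) p) := by
  subst p; rfl

theorem conv_comp_castLM_right {a b b' : G} (p : b = b') (f : H a →ₗ[k] B) (f' : H b' →ₗ[k] B) :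
    A.conv m f (f' ∘ₗ castLM k H p) = A.conv m f f' ∘ₗ castLM k H (congrArg (a * ·) p) := by
  subst p; rfl

theorem conv_assoc (hm : ∀ x y z : B, m (m (x ⊗ₜ y) ⊗ₜ z) = m (x ⊗ₜ m (y ⊗ₜ z)))
    {a b c : G} (f : H a →ₗ[k] B) (f' : H b →ₗ[k] B) (f'' : H c →ₗ[k] B) :
    A.conv m (A.conv m f f') f''
      = A.conv m f (A.conv m f' f'') ∘ₗ castLM k H (mul_assoc a b c) := by
  have hm_assoc : m ∘ₗ map (m ∘ₗ map f f') f''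
      = m ∘ₗ map f (m ∘ₗ map f' f'') ∘ₗ (TensorProduct.assoc k (H a) (H b) (H c)).toLinearMap :=
    TensorProduct.ext_threefold fun x y z => hm (f x) (f' y) (f'' z)
  have hcoassoc (x : H (a * b * c)) :
      TensorProduct.assoc k (H a) (H b) (H c) ((A.comul a b).rTensor (H c) (A.comul (a * b) c x))
        = (A.comul b c).lTensor (H a) (A.comul a (b * c) (castLM k H (mul_assoc a b c) x)) :=
    A.coassoc a b c x
  ext x
  calc A.conv m (A.conv m f f') f'' x
      = (m ∘ₗ map (m ∘ₗ map f f') f'') ((A.comul a b).rTensor (H c) (A.comul (a * b) c x)) := by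
        simp only [conv, LinearMap.comp_apply, LinearMap.map_rTensor, LinearMap.comp_assoc]
    _ = (m ∘ₗ map f (m ∘ₗ map f' f''))
          ((A.comul b c).lTensor (H a) (A.comul a (b * c) (castLM k H (mul_assoc a b c) x))) := by
        rw [hm_assoc, LinearMap.comp_apply, LinearMap.comp_apply, LinearEquiv.coe_coe, hcoassoc]
        rfl
    _ = _ := by simp only [conv, LinearMap.comp_apply, LinearMap.map_lTensor, LinearMap.comp_assoc]

theorem conv_assoc' (hm : ∀ x y z : B, m (m (x ⊗ₜ y) ⊗ₜ z) = m (x ⊗ₜ m (y ⊗ₜ z)))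
    {a b c : G} (f : H a →ₗ[k] B) (f' : H b →ₗ[k] B) (f'' : H c →ₗ[k] B) :
    A.conv m f (A.conv m f' f'')
      = A.conv m (A.conv m f f') f'' ∘ₗ castLM k H (mul_assoc a b c).symm := by
  rw [A.conv_assoc m hm, LinearMap.comp_assoc, castLM_comp_castLM]
  rfl

theorem conv_counit_left {e : B} (he : ∀ y, m (e ⊗ₜ y) = y) {b : G} (f : H b →ₗ[k] B) :
    A.conv m (A.counit.smulRight e) f = f ∘ₗ castLM k H (one_mul b) := by
  have hcounit : m ∘ₗ map (A.counit.smulRight e) f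
      = f ∘ₗ (TensorProduct.lid k (H b)).toLinearMap ∘ₗ A.counit.rTensor (H b) :=
    TensorProduct.ext' fun x y => by simp [← smul_tmul', he]
  ext x
  simp only [conv, ← LinearMap.comp_assoc, hcounit]
  exact congrArg f (A.counit_left b x)

theorem conv_counit_right {e : B} (he : ∀ y, m (y ⊗ₜ e) = y) {a : G} (f : H a →ₗ[k] B) :
    A.conv m f (A.counit.smulRight e) = f ∘ₗ castLM k H (mul_one a) := by
  have hcounit : m ∘ₗ map f (A.counit.smulRight e)
      = f ∘ₗ (TensorProduct.rid k (H a)).toLinearMap ∘ₗ A.counit.lTensor (H a) :=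
    TensorProduct.ext' fun x y => by simp [he]
  ext x
  simp only [conv, ← LinearMap.comp_assoc, hcounit]
  exact congrArg f (A.counit_right a x)

theorem conv_left_inv_eq_right_inv
    (hm : ∀ x y z : B, m (m (x ⊗ₜ y) ⊗ₜ z) = m (x ⊗ₜ m (y ⊗ₜ z)))
    {e : B} (he_left : ∀ y, m (e ⊗ₜ y) = y) (he_right : ∀ y, m (y ⊗ₜ e) = y)
    {a b : G} {ν ν' : H a →ₗ[k] B} {μ : H b →ₗ[k] B} (hab : a * b = 1) (hba : b * a = 1)
    (hν : A.conv m ν μ = A.counit.smulRight e ∘ₗ castLM k H hab)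
    (hν' : A.conv m μ ν' = A.counit.smulRight e ∘ₗ castLM k H hba) :
    ν = ν' := by
  have h := A.conv_assoc m hm ν μ ν'
  rw [hν, hν', conv_comp_castLM_left, conv_comp_castLM_right, A.conv_counit_left m he_left,
    A.conv_counit_right m he_right] at h
  simp only [LinearMap.comp_assoc, castLM_comp_castLM] at h
  exact (comp_castLM_injective _ h).symm

theorem conv_comp_S_self {e : B} {d : G} (φ : H d⁻¹ →ₗ[k] B)
    (hφ_mul : ∀ x y, φ (A.mul d⁻¹ (x ⊗ₜ y)) = m (φ x ⊗ₜ φ y)) (hφ_one : φ (A.one d⁻¹) = e) :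
    A.conv m (φ ∘ₗ A.S d) φ = A.counit.smulRight e ∘ₗ castLM k H (mul_inv_cancel d) := by
  have hφ : m ∘ₗ map (φ ∘ₗ A.S d) φ = φ ∘ₗ A.mul d⁻¹ ∘ₗ (A.S d).rTensor (H d⁻¹) :=
    TensorProduct.ext' fun x y => (hφ_mul _ _).symm
  ext x
  simp only [conv, ← LinearMap.comp_assoc, hφ]
  simp [A.mul_rTensor_S_comul, hφ_one]

theorem conv_self_comp_S {e : B} {d : G} (φ : H d⁻¹ →ₗ[k] B)
    (hφ_mul : ∀ x y, φ (A.mul d⁻¹ (x ⊗ₜ y)) = m (φ x ⊗ₜ φ y)) (hφ_one : φ (A.one d⁻¹) = e) :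
    A.conv m φ (φ ∘ₗ A.S d) = A.counit.smulRight e ∘ₗ castLM k H (inv_mul_cancel d) := by
  have hφ : m ∘ₗ map φ (φ ∘ₗ A.S d) = φ ∘ₗ A.mul d⁻¹ ∘ₗ (A.S d).lTensor (H d⁻¹) :=
    TensorProduct.ext' fun x y => (hφ_mul _ _).symm
  ext x
  simp only [conv, ← LinearMap.comp_assoc, hφ]
  simp [A.mul_lTensor_S_comul, hφ_one]

end Convolution

noncomputable def tensorMul (p q : G) : (H p ⊗[k] H q) ⊗[k] (H p ⊗[k] H q) →ₗ[k] H p ⊗[k] H q :=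
  map (A.mul p) (A.mul q) ∘ₗ (tensorTensorTensorComm k (H p) (H q) (H p) (H q)).toLinearMap

@[simp]
theorem tensorMul_tmul (p q : G) (u s : H p) (v t : H q) :
    A.tensorMul p q ((u ⊗ₜ v) ⊗ₜ (s ⊗ₜ t)) = A.mul p (u ⊗ₜ s) ⊗ₜ A.mul q (v ⊗ₜ t) :=
  rfl

theorem tensorMul_assoc (p q : G) (x y z : H p ⊗[k] H q) :
    A.tensorMul p q (A.tensorMul p q (x ⊗ₜ y) ⊗ₜ z)
      = A.tensorMul p q (x ⊗ₜ A.tensorMul p q (y ⊗ₜ z)) := by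
  induction x using TensorProduct.induction_on with
  | zero => simp
  | add x x' hx hx' => simp only [add_tmul, map_add, hx, hx']
  | tmul u v =>
    induction y using TensorProduct.induction_on with
    | zero => simp
    | add y y' hy hy' => simp only [add_tmul, tmul_add, map_add, hy, hy']
    | tmul s t =>
      induction z using TensorProduct.induction_on with
      | zero => simp
      | add z z' hz hz' => simp only [tmul_add, map_add, hz, hz']
      | tmul w r => simp only [tensorMul_tmul, A.mul_assoc']

theorem one_tensorMul (p q : G) (x : H p ⊗[k] H q) :
    A.tensorMul p q ((A.one p ⊗ₜ A.one q) ⊗ₜ x) = x := by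
  induction x using TensorProduct.induction_on with
  | zero => simp
  | add x x' hx hx' => simp only [tmul_add, map_add, hx, hx']
  | tmul u v => simp only [tensorMul_tmul, A.one_mul']

theorem tensorMul_one (p q : G) (x : H p ⊗[k] H q) :
    A.tensorMul p q (x ⊗ₜ (A.one p ⊗ₜ A.one q)) = x := by
  induction x using TensorProduct.induction_on with
  | zero => simp
  | add x x' hx hx' => simp only [add_tmul, map_add, hx, hx']
  | tmul u v => simp only [tensorMul_tmul, A.mul_one']

theorem comul_comp_castLM_mul {a b c : G} (p : c = a * b) (x y : H c) :
    (A.comul a b ∘ₗ castLM k H p) (A.mul c (x ⊗ₜ y))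
      = A.tensorMul a b ((A.comul a b ∘ₗ castLM k H p) x ⊗ₜ (A.comul a b ∘ₗ castLM k H p) y) := by
  subst p; exact A.comul_mul a b x y

theorem comul_comp_castLM_one {a b c : G} (p : c = a * b) :
    (A.comul a b ∘ₗ castLM k H p) (A.one c) = A.one a ⊗ₜ A.one b := by
  subst p; exact A.comul_one a b

noncomputable def includeLeft (a b : G) : H a →ₗ[k] H a ⊗[k] H b :=
  (TensorProduct.mk k (H a) (H b)).flip (A.one b)

noncomputable def includeRight (a b : G) : H b →ₗ[k] H a ⊗[k] H b :=
  TensorProduct.mk k (H a) (H b) (A.one a)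

theorem includeLeft_mul (a b : G) (x y : H a) :
    A.includeLeft a b (A.mul a (x ⊗ₜ y))
      = A.tensorMul a b (A.includeLeft a b x ⊗ₜ A.includeLeft a b y) := by
  simp [includeLeft, A.one_mul']

theorem includeRight_mul (a b : G) (x y : H b) :
    A.includeRight a b (A.mul b (x ⊗ₜ y))
      = A.tensorMul a b (A.includeRight a b x ⊗ₜ A.includeRight a b y) := by
  simp [includeRight, A.one_mul']

theorem conv_includeLeft_includeRight (a b : G) :
    A.conv (A.tensorMul a b) (A.includeLeft a b) (A.includeRight a b) = A.comul a b := by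
  have h : A.tensorMul a b ∘ₗ map (A.includeLeft a b) (A.includeRight a b) = LinearMap.id :=
    TensorProduct.ext' fun x y => by simp [includeLeft, includeRight, A.one_mul', A.mul_one']
  rw [conv, ← LinearMap.comp_assoc, h, LinearMap.id_comp]

theorem conv_includeRight_S_includeLeft_S (g h : G) :
    A.conv (A.tensorMul h⁻¹ g⁻¹) (A.includeRight h⁻¹ g⁻¹ ∘ₗ A.S g) (A.includeLeft h⁻¹ g⁻¹ ∘ₗ A.S h)
      = map (A.S h) (A.S g) ∘ₗ (TensorProduct.comm k (H g) (H h)).toLinearMap ∘ₗ A.comul g h := by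
  have hflip : A.tensorMul h⁻¹ g⁻¹ ∘ₗ
        map (A.includeRight h⁻¹ g⁻¹ ∘ₗ A.S g) (A.includeLeft h⁻¹ g⁻¹ ∘ₗ A.S h)
      = map (A.S h) (A.S g) ∘ₗ (TensorProduct.comm k (H g) (H h)).toLinearMap :=
    TensorProduct.ext' fun x y => by simp [includeLeft, includeRight, A.one_mul', A.mul_one']
  rw [conv, ← LinearMap.comp_assoc, hflip, LinearMap.comp_assoc]

theorem conv_comul_castLM_map_S_comm (g h : G) :
    A.conv (A.tensorMul h⁻¹ g⁻¹) (A.comul h⁻¹ g⁻¹ ∘ₗ castLM k H (mul_inv_rev g h))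
        (map (A.S h) (A.S g) ∘ₗ (TensorProduct.comm k (H g) (H h)).toLinearMap ∘ₗ A.comul g h)
      = A.counit.smulRight (A.one h⁻¹ ⊗ₜ A.one g⁻¹) ∘ₗ castLM k H (inv_mul_cancel (g * h)) := by
  have hm := A.tensorMul_assoc h⁻¹ g⁻¹
  rw [← A.conv_includeLeft_includeRight h⁻¹ g⁻¹, ← A.conv_includeRight_S_includeLeft_S g h,
    conv_comp_castLM_left, A.conv_assoc' _ hm, A.conv_assoc _ hm (A.includeLeft h⁻¹ g⁻¹),
    A.conv_self_comp_S _ (e := A.one h⁻¹ ⊗ₜ A.one g⁻¹) _ (A.includeRight_mul h⁻¹ g⁻¹) rfl,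
    conv_comp_castLM_right,
    A.conv_counit_right _ (A.tensorMul_one h⁻¹ g⁻¹)]
  simp only [LinearMap.comp_assoc, castLM_comp_castLM, conv_comp_castLM_left]
  rw [A.conv_self_comp_S _ (e := A.one h⁻¹ ⊗ₜ A.one g⁻¹) _ (A.includeLeft_mul h⁻¹ g⁻¹) rfl]
  simp only [LinearMap.comp_assoc, castLM_comp_castLM]

end HopfGCoalgebra

/-- The antipode of a Hopf `G`-coalgebra is an anti-coalgebra morphism:
`Δ_{h⁻¹,g⁻¹} ∘ S_{gh} = (S_h ⊗ S_g) ∘ τ ∘ Δ_{g,h}` where `τ` is the flip. -/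
theorem antipode_anti_coalgebra {k : Type*} [Field k] {G : Type*} [Group G]
    {H : G → Type*} [∀ g, AddCommGroup (H g)] [∀ g, Module k (H g)]
    (A : HopfGCoalgebra k G H) :
    ∀ (g h : G) (x : H (g * h)),
      A.comul h⁻¹ g⁻¹ (castLM k H (mul_inv_rev g h) (A.S (g * h) x))
        = TensorProduct.map (A.S h) (A.S g)
            ((TensorProduct.comm k (H g) (H h)) (A.comul g h x)) := by
  intro g h x
  have hS_left_inv := A.conv_comp_S_self (A.tensorMul h⁻¹ g⁻¹) _
    (A.comul_comp_castLM_mul (mul_inv_rev g h)) (A.comul_comp_castLM_one (mul_inv_rev g h))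
  have hS_eq := A.conv_left_inv_eq_right_inv _ (A.tensorMul_assoc h⁻¹ g⁻¹)
    (A.one_tensorMul h⁻¹ g⁻¹) (A.tensorMul_one h⁻¹ g⁻¹) _ _ hS_left_inv
    (A.conv_comul_castLM_map_S_comm g h)
  exact LinearMap.congr_fun hS_eq x
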